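/- arXiv:2506.12768 — 5 statements merged into one kernel-verified Lean document; each statement's English description precedes it below -/
import Mathlib

section
/- For every sequence of exponents α : ℕ → ℕ (indexed by m = 1, 2, 3, …) satisfying α_m ≥ m for all m, there exists a sequence of real coefficients β : ℕ → ℝ such that: (i) ∑_{m=1}^∞ |β_m|^q < ∞ for every q ∈ (1, ∞); (ii) the power series P(z) = ∑_{m=1}^∞ β_m z^{α_m} converges for every z ∈ (-1,1); and (iii) there exists a strictly increasing sequence {z_k}_{k≥1} ⊂ (0,1) with z_k → 1 as k → ∞ such that P(z_k) > 0 for all odd k and P(z_k) < 0 for all even k. In particular, P changes its sign infinitely many times on the interval (0,1). -/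
open Filter Topology

/-!
Choose indices `n₀ < n₁ < ⋯` along which the exponents `a t = α (n t)` grow super-geometrically,
`a (t + 1) ≥ 16 · 2 ^ (t + 1) · a t`, and put the weight `(-1/2)^g` at `n (2g)` and `-(-1/2)^g`
at `n (2g+1)`. The series regroups as `P z = ∑ g, (-1/2)^g (z ^ a (2g) - z ^ a (2g+1))` with
every bracket in `[0, 1]`. At `z = exp (-1 / a (2g))` the `g`-th bracket is
`e⁻¹ - z ^ a (2g+1) ≥ e⁻¹ - 1/16`, the earlier brackets are at most `a (2g-1) / a (2g)`, and the
later ones at most `z ^ a (2g+1) ≤ 1/16`; so the `g`-th term dominates and `P z` has the sign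
of `(-1)^g`.
-/

theorem Summable.abs_rpow_of_one_le {ι : Type*} {b : ι → ℝ} (hb : Summable b) {q : ℝ}
    (hq : 1 ≤ q) : Summable fun i => |b i| ^ q := by
  have hsmall : ∀ᶠ i in cofinite, |b i| < 1 :=
    hb.abs.tendsto_cofinite_zero.eventually (gt_mem_nhds zero_lt_one)
  refine hb.abs.of_norm_bounded_eventually ?_
  filter_upwards [hsmall] with i hi
  rw [Real.norm_eq_abs, abs_of_nonneg (by positivity)]
  simpa using Real.rpow_le_rpow_of_exponent_ge' (abs_nonneg (b i)) hi.le zero_le_one hq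

theorem hasSum_extend_zero_mul {ι κ R : Type*} [NonUnitalNonAssocSemiring R] [TopologicalSpace R]
    {p : ι → κ} (hp : p.Injective) (w : ι → R) (f : κ → R) {a : R}
    (h : HasSum (fun i => w i * f (p i)) a) :
    HasSum (fun m => Function.extend p w 0 m * f m) a := by
  have hextend : (fun m => Function.extend p w 0 m * f m) =
      Function.extend p (fun i => w i * f (p i)) 0 := by
    funext m
    by_cases hm : ∃ i, p i = m
    · obtain ⟨i, rfl⟩ := hm
      simp only [hp.extend_apply]
    · simp only [Function.extend_apply' _ _ _ hm, Pi.zero_apply, zero_mul]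
  rw [hextend]
  exact (hasSum_extend_zero hp).2 h

theorem summable_neg_half_pow_mul_pow {z : ℝ} (hz : |z| ≤ 1) (k : ℕ → ℕ) :
    Summable fun g => (-1 / 2 : ℝ) ^ g * z ^ k g := by
  refine summable_geometric_two.of_norm_bounded fun g => ?_
  rw [norm_mul, norm_pow, norm_pow, Real.norm_eq_abs, Real.norm_eq_abs]
  calc |(-1 / 2 : ℝ)| ^ g * |z| ^ k g ≤ |(-1 / 2 : ℝ)| ^ g * 1 := by
        gcongr; exact pow_le_one₀ (abs_nonneg z) hz
    _ = (1 / 2) ^ g := by norm_num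

theorem abs_neg_half_pow_mul {t : ℝ} (ht : 0 ≤ t) (g : ℕ) :
    |(-1 / 2 : ℝ) ^ g * t| = (1 / 2) ^ g * t := by
  rw [abs_mul, abs_pow, abs_of_nonneg ht]
  norm_num

namespace SignChange

variable (e : ℕ → ℕ)

def gapIndex : ℕ → ℕ
  | 0 => 0
  | t + 1 => max (gapIndex t + 1) (16 * 2 ^ (t + 1) * e (gapIndex t))

def gapExp (t : ℕ) : ℕ := e (gapIndex e t)

noncomputable def coeff (m : ℕ) : ℝ :=
  Function.extend (fun g => gapIndex e (2 * g)) (fun g => (-1 / 2 : ℝ) ^ g) 0 m -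
    Function.extend (fun g => gapIndex e (2 * g + 1)) (fun g => (-1 / 2 : ℝ) ^ g) 0 m

def pairTerm (g : ℕ) (z : ℝ) : ℝ := z ^ gapExp e (2 * g) - z ^ gapExp e (2 * g + 1)

noncomputable def testPoint (g : ℕ) : ℝ := Real.exp (-(gapExp e (2 * g) : ℝ)⁻¹)

theorem gapIndex_strictMono : StrictMono (gapIndex e) :=
  strictMono_nat_of_lt_succ fun t => by simp only [gapIndex]; omega

theorem hasSum_coeff_mul_pow {z : ℝ} (hz : |z| ≤ 1) :
    HasSum (fun m => coeff e m * z ^ e m) (∑' g, (-1 / 2 : ℝ) ^ g * pairTerm e g z) := by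
  have hinj₁ : (fun g => gapIndex e (2 * g)).Injective := fun a b h => by
    have := (gapIndex_strictMono e).injective h; omega
  have hinj₂ : (fun g => gapIndex e (2 * g + 1)).Injective := fun a b h => by
    have := (gapIndex_strictMono e).injective h; omega
  have h₁ := hasSum_extend_zero_mul hinj₁
    (fun g => (-1 / 2 : ℝ) ^ g) (fun m => z ^ e m)
    (summable_neg_half_pow_mul_pow hz fun g => gapExp e (2 * g)).hasSum
  have h₂ := hasSum_extend_zero_mul hinj₂
    (fun g => (-1 / 2 : ℝ) ^ g) (fun m => z ^ e m)
    (summable_neg_half_pow_mul_pow hz fun g => gapExp e (2 * g + 1)).hasSum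
  have hsum : ∑' g, (-1 / 2 : ℝ) ^ g * pairTerm e g z =
      ∑' g, (-1 / 2 : ℝ) ^ g * z ^ gapExp e (2 * g) -
        ∑' g, (-1 / 2 : ℝ) ^ g * z ^ gapExp e (2 * g + 1) := by
    rw [← Summable.tsum_sub (summable_neg_half_pow_mul_pow hz _)
      (summable_neg_half_pow_mul_pow hz _)]
    simp only [pairTerm, mul_sub]
  rw [hsum]
  simpa only [coeff, sub_mul] using h₁.sub h₂

theorem summable_coeff : Summable (coeff e) := by
  simpa using (hasSum_coeff_mul_pow e (z := 1) (by simp)).summable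

theorem testPoint_pow (g n : ℕ) :
    testPoint e g ^ n = Real.exp (-((n : ℝ) / gapExp e (2 * g))) := by
  rw [testPoint, ← Real.exp_nat_mul]
  ring_nf

variable {e} (he : ∀ m, m < e m)
include he

theorem gapExp_pos (t : ℕ) : 0 < gapExp e t :=
  Nat.zero_lt_of_lt (he (gapIndex e t))

theorem gapExp_succ (t : ℕ) : 16 * 2 ^ (t + 1) * gapExp e t ≤ gapExp e (t + 1) :=
  (le_max_right _ _).trans (he _).le

theorem gapExp_monotone : Monotone (gapExp e) :=
  monotone_nat_of_le_succ fun t =>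
    (Nat.le_mul_of_pos_left _ (by positivity)).trans (gapExp_succ he t)

theorem gapExp_growth {s t : ℕ} (hst : s < t) : 16 * 2 ^ t * gapExp e s ≤ gapExp e t := by
  cases t with
  | zero => omega
  | succ t =>
    calc 16 * 2 ^ (t + 1) * gapExp e s ≤ 16 * 2 ^ (t + 1) * gapExp e t :=
          Nat.mul_le_mul_left _ (gapExp_monotone he (by omega))
      _ ≤ gapExp e (t + 1) := gapExp_succ he t

theorem gapExp_strictMono : StrictMono (gapExp e) := fun s t hst => by
  have := gapExp_pos he s
  have := Nat.one_le_two_pow (n := t)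
  have := gapExp_growth he hst
  nlinarith

theorem testPoint_mem_Ioo (g : ℕ) : testPoint e g ∈ Set.Ioo 0 1 := by
  have : (0 : ℝ) < gapExp e (2 * g) := by exact_mod_cast gapExp_pos he _
  exact ⟨Real.exp_pos _, Real.exp_lt_one_iff.2 (by simpa using this)⟩

theorem testPoint_strictMono : StrictMono (testPoint e) := fun g g' h => by
  have hA : (gapExp e (2 * g) : ℝ) < gapExp e (2 * g') := by
    exact_mod_cast gapExp_strictMono he (by omega)
  have : (0 : ℝ) < gapExp e (2 * g) := by exact_mod_cast gapExp_pos he _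
  exact Real.exp_lt_exp.2 (neg_lt_neg (inv_strictAnti₀ this hA))

theorem tendsto_testPoint : Tendsto (testPoint e) atTop (𝓝 1) := by
  have hA : Tendsto (fun g => (gapExp e (2 * g) : ℝ)) atTop atTop :=
    tendsto_natCast_atTop_atTop.comp ((gapExp_strictMono he).comp
      (strictMono_mul_left_of_pos two_pos)).tendsto_atTop
  have h0 : Tendsto (fun g => -(gapExp e (2 * g) : ℝ)⁻¹) atTop (𝓝 0) := by
    simpa using (tendsto_inv_atTop_zero.comp hA).neg
  rw [← Real.exp_zero]
  exact (Real.continuous_exp.tendsto 0).comp h0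

theorem pairTerm_nonneg {z : ℝ} (hz₀ : 0 ≤ z) (hz₁ : z ≤ 1) (g : ℕ) :
    0 ≤ pairTerm e g z :=
  sub_nonneg.2 (pow_le_pow_of_le_one hz₀ hz₁ (gapExp_monotone he (by omega)))

theorem pairTerm_testPoint_self (g₀ : ℕ) :
    pairTerm e g₀ (testPoint e g₀) =
      Real.exp (-1) - testPoint e g₀ ^ gapExp e (2 * g₀ + 1) := by
  have hA : (gapExp e (2 * g₀) : ℝ) ≠ 0 := by exact_mod_cast (gapExp_pos he _).ne'
  rw [pairTerm, testPoint_pow, div_self hA]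

theorem testPoint_pow_le (g₀ : ℕ) : testPoint e g₀ ^ gapExp e (2 * g₀ + 1) ≤ 16⁻¹ := by
  have hA : (0 : ℝ) < gapExp e (2 * g₀) := by exact_mod_cast gapExp_pos he _
  have hB : 16 * (gapExp e (2 * g₀) : ℝ) ≤ gapExp e (2 * g₀ + 1) := by
    have := gapExp_growth he (show 2 * g₀ < 2 * g₀ + 1 by omega)
    have := Nat.one_le_two_pow (n := 2 * g₀ + 1)
    exact_mod_cast (by nlinarith : 16 * gapExp e (2 * g₀) ≤ gapExp e (2 * g₀ + 1))
  rw [testPoint_pow]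
  calc Real.exp (-((gapExp e (2 * g₀ + 1) : ℝ) / gapExp e (2 * g₀))) ≤ Real.exp (-16) :=
        Real.exp_le_exp.2 (neg_le_neg ((le_div_iff₀ hA).2 hB))
    _ ≤ 16⁻¹ := by
        rw [Real.exp_neg, inv_le_inv₀ (Real.exp_pos _) (by norm_num)]
        linarith [Real.add_one_le_exp 16]

theorem pairTerm_testPoint_le_of_lt {g g₀ : ℕ} (h : g < g₀) :
    pairTerm e g (testPoint e g₀) ≤ (1 / 2) ^ g₀ / 16 := by
  have hA : (0 : ℝ) < gapExp e (2 * g₀) := by exact_mod_cast gapExp_pos he _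
  have hB : 16 * 2 ^ g₀ * (gapExp e (2 * g + 1) : ℝ) ≤ gapExp e (2 * g₀) := by
    have h₁ := gapExp_growth he (show 2 * g + 1 < 2 * g₀ by omega)
    have h₂ : 2 ^ g₀ ≤ 2 ^ (2 * g₀) := Nat.pow_le_pow_right two_pos (by omega)
    exact_mod_cast (Nat.mul_le_mul_right _ (Nat.mul_le_mul_left 16 h₂)).trans h₁
  rw [pairTerm, testPoint_pow, testPoint_pow]
  calc Real.exp (-((gapExp e (2 * g) : ℝ) / gapExp e (2 * g₀)))
        - Real.exp (-((gapExp e (2 * g + 1) : ℝ) / gapExp e (2 * g₀)))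
      ≤ 1 - (-((gapExp e (2 * g + 1) : ℝ) / gapExp e (2 * g₀)) + 1) :=
        sub_le_sub (Real.exp_le_one_iff.2 (by rw [neg_nonpos]; positivity))
          (Real.add_one_le_exp _)
    _ = (gapExp e (2 * g + 1) : ℝ) / gapExp e (2 * g₀) := by ring
    _ ≤ (1 / 2) ^ g₀ / 16 := by
        rw [div_le_iff₀ hA]
        calc (gapExp e (2 * g + 1) : ℝ)
            = (1 / 2) ^ g₀ / 16 * (16 * 2 ^ g₀ * gapExp e (2 * g + 1)) := by
              rw [div_pow, one_pow]; field_simp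
          _ ≤ (1 / 2) ^ g₀ / 16 * gapExp e (2 * g₀) := by gcongr

theorem pairTerm_testPoint_le_of_gt {g g₀ : ℕ} (h : g₀ < g) :
    pairTerm e g (testPoint e g₀) ≤ testPoint e g₀ ^ gapExp e (2 * g₀ + 1) := by
  obtain ⟨hz₀, hz₁⟩ := testPoint_mem_Ioo he g₀
  calc pairTerm e g (testPoint e g₀) ≤ testPoint e g₀ ^ gapExp e (2 * g) :=
        sub_le_self _ (pow_nonneg hz₀.le _)
    _ ≤ _ := pow_le_pow_of_le_one hz₀.le hz₁.le (gapExp_monotone he (by omega))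

theorem abs_tsum_sub_pairTerm_le (g₀ : ℕ) :
    |∑' g, (-1 / 2 : ℝ) ^ g * pairTerm e g (testPoint e g₀)
        - (-1 / 2 : ℝ) ^ g₀ * pairTerm e g₀ (testPoint e g₀)|
      ≤ (1 / 2) ^ g₀ * (8⁻¹ + testPoint e g₀ ^ gapExp e (2 * g₀ + 1)) := by
  set z := testPoint e g₀
  set δ := z ^ gapExp e (2 * g₀ + 1)
  obtain ⟨hz₀, hz₁⟩ := testPoint_mem_Ioo he g₀
  have hT := pairTerm_nonneg he hz₀.le hz₁.le
  have hsum : Summable fun g => (-1 / 2 : ℝ) ^ g * pairTerm e g z := by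
    have hz : |z| ≤ 1 := by rw [abs_of_pos hz₀]; exact hz₁.le
    simpa only [pairTerm, mul_sub] using
      (summable_neg_half_pow_mul_pow hz _).sub (summable_neg_half_pow_mul_pow hz _)
  have hearly : |∑ g ∈ Finset.range g₀, (-1 / 2 : ℝ) ^ g * pairTerm e g z|
      ≤ (1 / 2) ^ g₀ * 8⁻¹ :=
    calc |∑ g ∈ Finset.range g₀, (-1 / 2 : ℝ) ^ g * pairTerm e g z|
        ≤ ∑ g ∈ Finset.range g₀, (1 / 2 : ℝ) ^ g * pairTerm e g z := by
          exact (Finset.abs_sum_le_sum_abs _ _).trans_eq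
            (Finset.sum_congr rfl fun g _ => abs_neg_half_pow_mul (hT g) g)
      _ ≤ ∑ g ∈ Finset.range g₀, (1 / 2 : ℝ) ^ g * ((1 / 2) ^ g₀ / 16) := by
          gcongr with g hg
          exact pairTerm_testPoint_le_of_lt he (Finset.mem_range.1 hg)
      _ ≤ 2 * ((1 / 2) ^ g₀ / 16) := by
          rw [← Finset.sum_mul]
          gcongr
          exact sum_geometric_two_le g₀
      _ = (1 / 2) ^ g₀ * 8⁻¹ := by ring
  have hlate : |∑' i, (-1 / 2 : ℝ) ^ (i + (g₀ + 1)) * pairTerm e (i + (g₀ + 1)) z|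
      ≤ (1 / 2) ^ g₀ * δ := by
    have hgeom : HasSum (fun i => (1 / 2 : ℝ) ^ (i + (g₀ + 1)) * δ) ((1 / 2) ^ g₀ * δ) := by
      have h := hasSum_geometric_two.mul_left ((1 / 2 : ℝ) ^ (g₀ + 1) * δ)
      rw [show (1 / 2 : ℝ) ^ (g₀ + 1) * δ * 2 = (1 / 2) ^ g₀ * δ by ring] at h
      exact h.congr_fun fun i => by ring
    rw [← Real.norm_eq_abs]
    refine tsum_of_norm_bounded hgeom fun i => ?_
    rw [Real.norm_eq_abs, abs_neg_half_pow_mul (hT _)]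
    gcongr
    exact pairTerm_testPoint_le_of_gt he (by omega)
  rw [← hsum.sum_add_tsum_nat_add (g₀ + 1), Finset.sum_range_succ, add_sub_right_comm,
    add_sub_cancel_right]
  calc _ ≤ _ := abs_add_le _ _
    _ ≤ _ := add_le_add hearly hlate
    _ = _ := by ring

theorem neg_one_pow_mul_tsum_pos (g₀ : ℕ) :
    0 < (-1) ^ g₀ * ∑' g, (-1 / 2 : ℝ) ^ g * pairTerm e g (testPoint e g₀) := by
  have hrem := abs_tsum_sub_pairTerm_le he g₀
  set P := ∑' g, (-1 / 2 : ℝ) ^ g * pairTerm e g (testPoint e g₀)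
  set T := pairTerm e g₀ (testPoint e g₀)
  set δ := testPoint e g₀ ^ gapExp e (2 * g₀ + 1)
  have hT : T = Real.exp (-1) - δ := pairTerm_testPoint_self he g₀
  have hδ : δ ≤ 16⁻¹ := testPoint_pow_le he g₀
  have hexp : 3⁻¹ < Real.exp (-1) := by
    rw [Real.exp_neg, inv_lt_inv₀ (by norm_num) (Real.exp_pos _)]
    linarith [Real.exp_one_lt_d9]
  have hsplit : (-1) ^ g₀ * P = (1 / 2) ^ g₀ * T + (-1) ^ g₀ * (P - (-1 / 2) ^ g₀ * T) := by
    rw [mul_sub, ← mul_assoc, ← mul_pow]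
    norm_num
  have herr : -|P - (-1 / 2) ^ g₀ * T| ≤ (-1) ^ g₀ * (P - (-1 / 2) ^ g₀ * T) := by
    have h := neg_abs_le ((-1 : ℝ) ^ g₀ * (P - (-1 / 2) ^ g₀ * T))
    rwa [abs_mul, abs_pow, abs_neg, abs_one, one_pow, one_mul] at h
  have hmain : 0 < (1 / 2 : ℝ) ^ g₀ * (T - (8⁻¹ + δ)) := by
    have : 0 < T - (8⁻¹ + δ) := by linarith
    positivity
  linarith

theorem neg_one_pow_mul_tsum_coeff_pos (g₀ : ℕ) :
    0 < (-1) ^ g₀ * ∑' m, coeff e m * testPoint e g₀ ^ e m := by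
  obtain ⟨hz₀, hz₁⟩ := testPoint_mem_Ioo he g₀
  rw [(hasSum_coeff_mul_pow e (abs_le.2 ⟨by linarith, hz₁.le⟩)).tsum_eq]
  exact neg_one_pow_mul_tsum_pos he g₀

end SignChange

open SignChange in
/-- Theorem 3.2 (i)-(iii) of the paper: affirmative answer to question (Q). -/
theorem stmt0 (α : ℕ → ℕ) (hα : ∀ m : ℕ, 1 ≤ m → m ≤ α m) :
    ∃ β : ℕ → ℝ,
      (∀ q : ℝ, 1 < q → Summable fun m : ℕ => |β (m + 1)| ^ q) ∧
      (∀ z : ℝ, z ∈ Set.Ioo (-1 : ℝ) 1 →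
        Summable fun m : ℕ => β (m + 1) * z ^ α (m + 1)) ∧
      ∃ z : ℕ → ℝ,
        (∀ k : ℕ, 1 ≤ k → z k ∈ Set.Ioo (0 : ℝ) 1) ∧
        (∀ k : ℕ, 1 ≤ k → z k < z (k + 1)) ∧
        Tendsto z atTop (𝓝 1) ∧
        (∀ k : ℕ, 1 ≤ k → Odd k →
          0 < ∑' m : ℕ, β (m + 1) * z k ^ α (m + 1)) ∧
        (∀ k : ℕ, 1 ≤ k → Even k →
          (∑' m : ℕ, β (m + 1) * z k ^ α (m + 1)) < 0) := by
  -- The series in the statement starts at `m = 1`; `e` re-indexes its exponents from `0`.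
  set e : ℕ → ℕ := fun m => α (m + 1)
  have he : ∀ m, m < e m := fun m => hα (m + 1) (by omega)
  refine ⟨fun n => coeff e (n - 1), fun q hq => ?_, fun z hz => ?_, fun k => testPoint e (k - 1),
    fun k _ => testPoint_mem_Ioo he _, fun k hk => testPoint_strictMono he (by omega),
    (tendsto_testPoint he).comp (tendsto_sub_atTop_nat 1), fun k _ hodd => ?_,
    fun k hk heven => ?_⟩ <;> simp only [Nat.add_sub_cancel]
  · exact (summable_coeff e).abs_rpow_of_one_le hq.le
  · exact (hasSum_coeff_mul_pow e (abs_le.2 ⟨hz.1.le, hz.2.le⟩)).summable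
  · simpa [(Nat.Odd.sub_odd hodd odd_one).neg_one_pow] using
      neg_one_pow_mul_tsum_coeff_pos he (k - 1)
  · simpa [(Nat.Even.sub_odd hk heven odd_one).neg_one_pow] using
      neg_one_pow_mul_tsum_coeff_pos he (k - 1)
end

section
/- For every sequence of exponents α : ℕ → ℕ (indexed by m = 1, 2, 3, …) satisfying α_m ≥ m for all m, the coefficient sequence β : ℕ → ℝ in the affirmative answer to question (Q) can be chosen so that additionally β_m ∈ [-1,1] for all m and ∑_{m=1}^∞ |β_m|^γ = ∑_{m=1}^∞ (1/m)^γ < ∞ for every γ ∈ (1, ∞). That is: there exists β : ℕ → ℝ with β_m ∈ [-1,1] for all m, ∑_{m=1}^∞ |β_m|^γ = ∑_{m=1}^∞ m^{-γ} for all γ ∈ (1,∞), and a strictly increasing sequence {z_k}_{k≥1} ⊂ (0,1) with z_k → 1 such that the series P(z) = ∑_{m=1}^∞ β_m z^{α_m} converges for all z ∈ (-1,1) and satisfies P(z_k) > 0 for all odd k and P(z_k) < 0 for all even k. -/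
/-!
Put `β_{m+1} = ± 1/(m+1)`, with the constant sign `(-1)^k` on the `k`-th block of indices
`[N_k, N_{k+1})`. The blocks and the points `z_k` are chosen inductively. Since the harmonic series
diverges, a point `z_{k+1}` close enough to `1` makes the contribution of block `k` exceed the sum
of all `1/(m+1)` over the earlier indices by `2`; making the block long enough then brings the
geometric tail below `1`. Hence the sign of `P(z_{k+1})` is that of block `k`.
-/

open Filter Topology Finset

theorem abs_mul_pow_le_pow_of_abs_le_one {b z : ℝ} (hb : |b| ≤ 1) (hz : |z| ≤ 1) {m n : ℕ}
    (hmn : m ≤ n) : |b * z ^ n| ≤ |z| ^ m := by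
  rw [abs_mul, abs_pow]
  calc |b| * |z| ^ n ≤ 1 * |z| ^ m :=
        mul_le_mul hb (pow_le_pow_of_le_one (abs_nonneg z) hz hmn) (by positivity) zero_le_one
    _ = |z| ^ m := one_mul _

theorem abs_tsum_nat_add_le_of_abs_le_pow {f : ℕ → ℝ} {z : ℝ} (hz0 : 0 ≤ z) (hz1 : z < 1)
    (hf : ∀ m, |f m| ≤ z ^ m) (N : ℕ) : |∑' m, f (m + N)| ≤ z ^ N / (1 - z) := by
  have hg : HasSum (fun m => z ^ N * z ^ m) (z ^ N * (1 - z)⁻¹) :=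
    (hasSum_geometric_of_lt_one hz0 hz1).mul_left _
  simpa only [div_eq_mul_inv, Real.norm_eq_abs] using tsum_of_norm_bounded (f := fun m => f (m + N))
    hg fun m => by simpa only [Real.norm_eq_abs, pow_add, mul_comm] using hf (m + N)

/-- The head `[0, N)` contributes at least `-∑ 1/(m+1)` and, since `z^N' ≤ 1 - z`, the tail
`[N', ∞)` at least `-1`; the `2` in `hblock` covers the tail and leaves `1`. -/
theorem one_le_tsum_of_dominant_block {f : ℕ → ℝ} {z : ℝ} (hz0 : 0 ≤ z) (hz1 : z < 1)
    (hf : ∀ m, |f m| ≤ z ^ m) (hf' : ∀ m, |f m| ≤ 1 / (m + 1))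
    {N N' : ℕ} (hNN' : N ≤ N') (hzN' : z ^ N' ≤ 1 - z)
    (hblock : 2 + ∑ m ∈ range N, (1 / (m + 1) : ℝ) ≤ ∑ m ∈ Ico N N', f m) :
    1 ≤ ∑' m, f m := by
  have hsum : Summable f := .of_norm_bounded (summable_geometric_of_lt_one hz0 hz1) hf
  have hhead : -∑ m ∈ range N, (1 / (m + 1) : ℝ) ≤ ∑ m ∈ range N, f m := by
    rw [neg_le]
    exact (neg_le_abs _).trans ((abs_sum_le_sum_abs _ _).trans (sum_le_sum fun m _ => hf' m))
  have htail : -1 ≤ ∑' m, f (m + N') := by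
    have hgeom : z ^ N' / (1 - z) ≤ 1 := (div_le_one (by linarith)).2 hzN'
    linarith [neg_abs_le (∑' m, f (m + N')), abs_tsum_nat_add_le_of_abs_le_pow hz0 hz1 hf N']
  rw [← hsum.sum_add_tsum_nat_add N', ← sum_range_add_sum_Ico f hNN']
  linarith

theorem exists_block (a : ℕ → ℕ) (N : ℕ) (C : ℝ) {w : ℝ} (hw : w < 1) :
    ∃ q : ℕ × Set.Ioo (0 : ℝ) 1, N < q.1 ∧ w < q.2 ∧ (q.2 : ℝ) ^ q.1 ≤ 1 - q.2 ∧
      C ≤ ∑ m ∈ Ico N q.1, (q.2 : ℝ) ^ a m / (m + 1) := by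
  obtain ⟨M, hNM, hM⟩ : ∃ M, N < M ∧ C < ∑ m ∈ Ico N M, (1 / (m + 1) : ℝ) := by
    obtain ⟨M, hNM, hM⟩ := ((eventually_gt_atTop N).and
      (Real.tendsto_sum_range_one_div_nat_succ_atTop.eventually_gt_atTop
        (C + ∑ m ∈ range N, (1 / (m + 1) : ℝ)))).exists
    refine ⟨M, hNM, ?_⟩
    rw [sum_Ico_eq_sub _ hNM.le]
    linarith
  set g : ℝ → ℝ := fun x => ∑ m ∈ Ico N M, x ^ a m / (m + 1)
  have hg : Tendsto g (𝓝[<] 1) (𝓝 (∑ m ∈ Ico N M, (1 / (m + 1) : ℝ))) := by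
    have hcont : Continuous g := by fun_prop
    simpa only [g, one_pow] using hcont.continuousWithinAt.tendsto (x := 1) (s := Set.Iio 1)
  obtain ⟨z, ⟨⟨hCz, hwz⟩, hz0⟩, hz1⟩ := (((hg.eventually (eventually_gt_nhds hM)).and
    (nhdsWithin_le_nhds (eventually_gt_nhds hw))).and
    (nhdsWithin_le_nhds (eventually_gt_nhds one_pos)) |>.and self_mem_nhdsWithin).exists
  obtain ⟨N', hMN', hzN'⟩ := ((eventually_ge_atTop M).and
    ((tendsto_pow_atTop_nhds_zero_of_lt_one hz0.le hz1).eventually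
      (eventually_le_nhds (sub_pos.2 hz1)))).exists
  refine ⟨(N', ⟨z, hz0, hz1⟩), hNM.trans_le hMN', hwz, hzN', hCz.le.trans ?_⟩
  exact sum_le_sum_of_subset_of_nonneg (Ico_subset_Ico le_rfl hMN') fun m _ _ => by positivity

section Construction

variable (a : ℕ → ℕ)

/-- The `k`-th entry is `(N_k, z_k)`; block `k` is the index range `[N_k, N_{k+1})`. -/
noncomputable def block : ℕ → ℕ × Set.Ioo (0 : ℝ) 1
  | 0 => (0, ⟨1 / 2, by norm_num, by norm_num⟩)
  | k + 1 =>
    (exists_block a (block k).1 (2 + ∑ m ∈ range (block k).1, (1 / (m + 1) : ℝ))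
      (w := max (block k).2 (1 - 1 / (k + 2)))
      (max_lt (block k).2.2.2 (sub_lt_self _ (by positivity)))).choose

noncomputable def blockStart (k : ℕ) : ℕ := (block a k).1

noncomputable def samplePoint (k : ℕ) : ℝ := (block a k).2

theorem samplePoint_mem_Ioo (k : ℕ) : samplePoint a k ∈ Set.Ioo 0 1 := (block a k).2.2

theorem block_succ_spec (k : ℕ) :
    blockStart a k < blockStart a (k + 1) ∧
      max (samplePoint a k) (1 - 1 / (k + 2)) < samplePoint a (k + 1) ∧
      samplePoint a (k + 1) ^ blockStart a (k + 1) ≤ 1 - samplePoint a (k + 1) ∧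
      2 + ∑ m ∈ range (blockStart a k), (1 / (m + 1) : ℝ) ≤
        ∑ m ∈ Ico (blockStart a k) (blockStart a (k + 1)),
          samplePoint a (k + 1) ^ a m / (m + 1) :=
  (exists_block a _ _ (max_lt (block a k).2.2.2 (sub_lt_self _ (by positivity)))).choose_spec

theorem strictMono_blockStart : StrictMono (blockStart a) :=
  strictMono_nat_of_lt_succ fun k => (block_succ_spec a k).1

theorem strictMono_samplePoint : StrictMono (samplePoint a) :=
  strictMono_nat_of_lt_succ fun k => (le_max_left _ _).trans_lt (block_succ_spec a k).2.1

theorem tendsto_samplePoint : Tendsto (samplePoint a) atTop (𝓝 1) := by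
  have hlow : ∀ k : ℕ, 1 - 1 / ((k : ℝ) + 1) ≤ samplePoint a k := by
    rintro (_ | k)
    · simpa using (samplePoint_mem_Ioo a 0).1.le
    · have h := (le_max_right _ _).trans_lt (block_succ_spec a k).2.1
      rw [Nat.cast_succ, add_assoc, one_add_one_eq_two]
      exact h.le
  have hlim : Tendsto (fun k : ℕ => 1 - 1 / ((k : ℝ) + 1)) atTop (𝓝 1) := by
    simpa using tendsto_one_div_add_atTop_nhds_zero_nat.const_sub (1 : ℝ)
  exact tendsto_of_tendsto_of_tendsto_of_le_of_le hlim tendsto_const_nhds hlow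
    fun k => (samplePoint_mem_Ioo a k).2.le

theorem exists_lt_blockStart (m : ℕ) : ∃ k, m < blockStart a (k + 1) :=
  ⟨m, (strictMono_blockStart a).le_apply.trans_lt (strictMono_blockStart a m.lt_succ_self)⟩

open Classical in
noncomputable def blockIndex (m : ℕ) : ℕ := Nat.find (exists_lt_blockStart a m)

theorem blockIndex_eq {k m : ℕ} (hk : blockStart a k ≤ m) (hk' : m < blockStart a (k + 1)) :
    blockIndex a m = k := by
  classical
  rw [blockIndex, Nat.find_eq_iff]
  refine ⟨hk', fun i hi => not_lt.2 ?_⟩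
  exact ((strictMono_blockStart a).monotone hi).trans hk

/-- The coefficient of `z ^ a m`, i.e. `β_{m+1}` in the one-based indexing of the paper. -/
noncomputable def coeff (m : ℕ) : ℝ := (-1) ^ blockIndex a m / (m + 1)

theorem abs_coeff (m : ℕ) : |coeff a m| = 1 / (m + 1) := by
  rw [coeff, abs_div, abs_neg_one_pow, abs_of_pos (by positivity)]

theorem abs_coeff_le_one (m : ℕ) : |coeff a m| ≤ 1 := by
  rw [abs_coeff, div_le_one (by positivity)]
  simp

theorem neg_one_pow_mul_coeff {k m : ℕ} (hm : m ∈ Ico (blockStart a k) (blockStart a (k + 1))) :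
    (-1) ^ k * coeff a m = 1 / (m + 1) := by
  rw [coeff, blockIndex_eq a (mem_Ico.1 hm).1 (mem_Ico.1 hm).2, mul_div_assoc', ← pow_add,
    Even.neg_one_pow ⟨k, rfl⟩]

theorem summable_coeff_mul_pow (ha : ∀ m, m ≤ a m) {z : ℝ} (hz : |z| < 1) :
    Summable fun m => coeff a m * z ^ a m :=
  .of_norm_bounded (summable_geometric_of_lt_one (abs_nonneg z) hz) fun m =>
    abs_mul_pow_le_pow_of_abs_le_one (abs_coeff_le_one a m) hz.le (ha m)

theorem one_le_neg_one_pow_mul_tsum (ha : ∀ m, m ≤ a m) (k : ℕ) :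
    1 ≤ (-1) ^ k * ∑' m, coeff a m * samplePoint a (k + 1) ^ a m := by
  obtain ⟨hz0, hz1⟩ := samplePoint_mem_Ioo a (k + 1)
  obtain ⟨hN, -, hzN, hblock⟩ := block_succ_spec a k
  have habs : ∀ m, |(-1) ^ k * (coeff a m * samplePoint a (k + 1) ^ a m)|
      = |coeff a m * samplePoint a (k + 1) ^ a m| := by
    simp only [abs_mul, abs_neg_one_pow, one_mul, implies_true]
  rw [← tsum_mul_left]
  refine one_le_tsum_of_dominant_block hz0.le hz1 (fun m => ?_) (fun m => ?_) hN.le hzN ?_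
  · rw [habs]
    exact (abs_mul_pow_le_pow_of_abs_le_one (abs_coeff_le_one a m)
      ((abs_of_pos hz0).trans_le hz1.le) (ha m)).trans_eq (by rw [abs_of_pos hz0])
  · rw [habs, abs_mul, abs_coeff, abs_pow, abs_of_pos hz0]
    exact mul_le_of_le_one_right (by positivity) (pow_le_one₀ hz0.le hz1.le)
  · refine hblock.trans_eq (sum_congr rfl fun m hm => ?_)
    rw [← mul_assoc, neg_one_pow_mul_coeff a hm]
    ring

end Construction

/-- Theorem 3.2 (ii)-(iii) of the paper: the coefficients solving question (Q) can be
chosen with values in `[-1,1]` and with `γ`-sums equal to those of the harmonic sequence. -/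
theorem stmt1 (α : ℕ → ℕ) (hα : ∀ m : ℕ, 1 ≤ m → m ≤ α m) :
    ∃ β : ℕ → ℝ,
      (∀ m : ℕ, 1 ≤ m → β m ∈ Set.Icc (-1 : ℝ) 1) ∧
      (∀ γ : ℝ, 1 < γ →
        (Summable fun m : ℕ => |β (m + 1)| ^ γ) ∧
        (∑' m : ℕ, |β (m + 1)| ^ γ) = ∑' m : ℕ, (1 / (m + 1 : ℝ)) ^ γ) ∧
      (∀ z : ℝ, z ∈ Set.Ioo (-1 : ℝ) 1 →
        Summable fun m : ℕ => β (m + 1) * z ^ α (m + 1)) ∧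
      ∃ z : ℕ → ℝ,
        (∀ k : ℕ, 1 ≤ k → z k ∈ Set.Ioo (0 : ℝ) 1) ∧
        (∀ k : ℕ, 1 ≤ k → z k < z (k + 1)) ∧
        Tendsto z atTop (𝓝 1) ∧
        (∀ k : ℕ, 1 ≤ k → Odd k →
          0 < ∑' m : ℕ, β (m + 1) * z k ^ α (m + 1)) ∧
        (∀ k : ℕ, 1 ≤ k → Even k →
          (∑' m : ℕ, β (m + 1) * z k ^ α (m + 1)) < 0) := by
  set a : ℕ → ℕ := fun m => α (m + 1)
  have ha : ∀ m, m ≤ a m := fun m => (hα (m + 1) m.succ_pos).trans' m.le_succ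
  refine ⟨fun j => coeff a (j - 1), fun _ _ => abs_le.1 (abs_coeff_le_one a _), fun γ hγ => ?_,
    fun z hz => summable_coeff_mul_pow a ha (abs_lt.2 hz), samplePoint a,
    fun k _ => samplePoint_mem_Ioo a k, fun k _ => strictMono_samplePoint a k.lt_succ_self,
    tendsto_samplePoint a, fun k hk hodd => ?_, fun k hk heven => ?_⟩
  · simp only [Nat.add_sub_cancel, abs_coeff, and_true]
    refine ((Real.summable_one_div_nat_add_rpow 1 γ).2 hγ).congr fun n => ?_
    rw [abs_of_pos (by positivity), one_div, one_div, Real.inv_rpow (by positivity)]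
  · obtain ⟨j, rfl⟩ := Nat.exists_eq_add_of_le' hk
    have h := one_le_neg_one_pow_mul_tsum a ha j
    rw [(by simpa [parity_simps] using hodd : Even j).neg_one_pow] at h
    simp only [Nat.add_sub_cancel]
    linarith
  · obtain ⟨j, rfl⟩ := Nat.exists_eq_add_of_le' hk
    have h := one_le_neg_one_pow_mul_tsum a ha j
    rw [(by simpa [parity_simps] using heven : Odd j).neg_one_pow] at h
    simp only [Nat.add_sub_cancel]
    linarith
end

section
/- Let α : ℕ → ℕ (indexed by m = 1, 2, 3, …) satisfy α_m ≥ m for all m, and let z₁ ∈ (0,1). Then there exist sequences β : ℕ → ℝ, z : ℕ → ℝ, and p, q, r : ℕ → ℕ with p_1 = q_1 = r_1 = 1, β_1 = 1, and z_1 equal to the given value, such that for every k ≥ 1: (i) z_k ∈ (0,1); (ii) z_{k+1} > z_k; (iii) p_{k+1} > q_k; (iv) q_{k+1} > p_{k+1}; (v) r_{k+1} > r_k; (vi) β_m ∈ [-1,1] for all 1 ≤ m ≤ q_k; (vii) β_m = 0 for all m with q_k < m < p_{k+1}; (viii) ∑_{m=1}^{q_k} |β_m|^γ = ∑_{m=1}^{r_k}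 (1/m)^γ for every γ ∈ [1,∞); (ix) ∑_{m=1}^{q_k} β_m z_k^{α_m} > 0 if k is odd and ∑_{m=1}^{q_k} β_m z_k^{α_m} < 0 if k is even; and (x) |∑_{m=1}^{q_k} β_m z_k^{α_m}| > ∑_{m=p_{k+1}}^∞ z_k^{α_m} > 0 (the latter tail series converging). -/
open Filter Topology

/-!
Each stage appends, after a long run of zeros, the next block `±1/(r+1), …, ±1/N` of the
harmonic sequence, with the sign opposite to the current one. Since the harmonic series
diverges, a long enough block flips the sign of `∑ β_m`, the value at `x = 1` of
`x ↦ ∑ β_m x^{α_m}`; by continuity the new sign persists at some `z_{k+1} ∈ (z_k, 1)`.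
The run of zeros is chosen so long that the geometric bound `z_k^p / (1 - z_k)` on the tail
`∑_{m ≥ p} z_k^{α_m}` is below `|∑ β_m z_k^{α_m}|`. Powers `|β_m|^γ` only see which harmonic
terms have been used, whence (viii).
-/

open Finset

section Tail

variable {α : ℕ → ℕ} {z : ℝ}

lemma pow_comp_add_le_geometric (hα : ∀ m, 1 ≤ m → m ≤ α m) (hz₀ : 0 ≤ z) (hz₁ : z ≤ 1)
    {p : ℕ} (hp : 1 ≤ p) (m : ℕ) : z ^ α (m + p) ≤ z ^ p * z ^ m := by
  rw [← pow_add]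
  exact pow_le_pow_of_le_one hz₀ hz₁ ((by omega : p + m ≤ m + p).trans (hα _ (by omega)))

lemma summable_pow_comp_add (hα : ∀ m, 1 ≤ m → m ≤ α m) (hz : z ∈ Set.Ioo 0 1) {p : ℕ}
    (hp : 1 ≤ p) : Summable fun m => z ^ α (m + p) :=
  .of_nonneg_of_le (fun _ => pow_nonneg hz.1.le _)
    (pow_comp_add_le_geometric hα hz.1.le hz.2.le hp)
    ((summable_geometric_of_lt_one hz.1.le hz.2).mul_left _)

lemma tsum_pow_comp_add_pos (hα : ∀ m, 1 ≤ m → m ≤ α m) (hz : z ∈ Set.Ioo 0 1) {p : ℕ}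
    (hp : 1 ≤ p) : 0 < ∑' m, z ^ α (m + p) :=
  (summable_pow_comp_add hα hz hp).tsum_pos (fun _ => pow_nonneg hz.1.le _) 0 (pow_pos hz.1 _)

lemma tendsto_tsum_pow_comp_add (hα : ∀ m, 1 ≤ m → m ≤ α m) (hz : z ∈ Set.Ioo 0 1) :
    Tendsto (fun p => ∑' m, z ^ α (m + p)) atTop (𝓝 0) := by
  have hgeom : Tendsto (fun p : ℕ => z ^ p * (1 - z)⁻¹) atTop (𝓝 0) := by
    simpa using (tendsto_pow_atTop_nhds_zero_of_lt_one hz.1.le hz.2).mul_const (1 - z)⁻¹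
  refine tendsto_of_tendsto_of_tendsto_of_le_of_le' tendsto_const_nhds hgeom
    (.of_forall fun _ => tsum_nonneg fun _ => pow_nonneg hz.1.le _) ?_
  filter_upwards [eventually_ge_atTop 1] with p hp
  calc ∑' m, z ^ α (m + p) ≤ ∑' m, z ^ p * z ^ m :=
        (summable_pow_comp_add hα hz hp).tsum_le_tsum
          (pow_comp_add_le_geometric hα hz.1.le hz.2.le hp)
          ((summable_geometric_of_lt_one hz.1.le hz.2).mul_left _)
    _ = z ^ p * (1 - z)⁻¹ := by rw [tsum_mul_left, tsum_geometric_of_lt_one hz.1.le hz.2]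

end Tail

lemma tendsto_sum_Ioc_one_div (r : ℕ) :
    Tendsto (fun N => ∑ j ∈ Ioc r N, (1 : ℝ) / j) atTop atTop := by
  have hpartial : Tendsto (fun n => ∑ j ∈ range n, (1 : ℝ) / j) atTop atTop :=
    (not_summable_iff_tendsto_nat_atTop_of_nonneg fun _ => by positivity).1
      Real.not_summable_one_div_natCast
  refine (tendsto_atTop_add_const_right _ (-∑ j ∈ range (r + 1), (1 : ℝ) / j)
    (hpartial.comp (tendsto_add_atTop_nat 1))).congr' ?_
  filter_upwards [eventually_ge_atTop r] with N hN
  rw [Function.comp_apply, ← sub_eq_add_neg, ← sum_Ico_eq_sub _ (by omega),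
    Ico_add_one_add_one_eq_Ioc]

lemma exists_mem_Ioo_pos_of_continuousAt {f : ℝ → ℝ} {a b : ℝ} (hab : a < b)
    (hf : ContinuousAt f b) (hb : 0 < f b) : ∃ x ∈ Set.Ioo a b, 0 < f x :=
  (Filter.Eventually.and (Ioo_mem_nhdsLT hab)
    ((hf.eventually (lt_mem_nhds hb)).filter_mono nhdsWithin_le_nhds)).exists

lemma sum_Icc_one_add_sum_Ioc {M : Type*} [AddCommMonoid M] (f : ℕ → M) {a b : ℕ}
    (hab : a ≤ b) : ∑ m ∈ Icc 1 a, f m + ∑ m ∈ Ioc a b, f m = ∑ m ∈ Icc 1 b, f m := by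
  rw [← zero_add 1, Icc_add_one_left_eq_Ioc, Icc_add_one_left_eq_Ioc]
  exact sum_Ioc_consecutive f (Nat.zero_le a) hab

theorem exists_seq_of_forall_exists_succ {σ : Type*} {P : ℕ → σ → Prop} {R : σ → σ → Prop}
    {s₀ : σ} (h₀ : P 0 s₀) (step : ∀ n s, P n s → ∃ t, P (n + 1) t ∧ R s t) :
    ∃ f : ℕ → σ, f 0 = s₀ ∧ ∀ n, P n (f n) ∧ R (f n) (f (n + 1)) := by
  choose g hg using step
  let F : ∀ n, {s // P n s} := fun n =>
    Nat.rec ⟨s₀, h₀⟩ (fun n x => ⟨g n x x.2, (hg n x x.2).1⟩) n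
  exact ⟨fun n => (F n).1, rfl, fun n => ⟨(F n).2, (hg n _ (F n).2).2⟩⟩

theorem diag_eq_of_forall_succ_eq {M : Type*} {b : ℕ → ℕ → M} {q : ℕ → ℕ} (hq : StrictMono q)
    (hb : ∀ n m, m ≤ q n → b (n + 1) m = b n m) {n m : ℕ} (hm : m ≤ q n) : b m m = b n m := by
  have stable : ∀ n j, n ≤ j → ∀ m, m ≤ q n → b j m = b n m := by
    intro n j hnj
    induction j, hnj using Nat.le_induction with
    | base => exact fun _ _ => rfl
    | succ j hnj ih => exact fun m hm => (hb j m (hm.trans (hq.monotone hnj))).trans (ih m hm)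
  rcases le_total m n with hmn | hnm
  · exact (stable m n hmn m (hq.id_le m)).symm
  · exact stable n m hnm m hm

theorem sign_of_neg_one_pow_mul_pos {x : ℝ} {n : ℕ} (h : 0 < (-1) ^ n * x) :
    (Odd (n + 1) → 0 < x) ∧ (Even (n + 1) → x < 0) := by
  rcases n.even_or_odd with hn | hn
  · simp_all [hn.neg_one_pow, Nat.even_add_one]
  · simp_all [hn.neg_one_pow, Nat.odd_add_one]

lemma neg_mul_add_neg_mul_pos {ε T H : ℝ} (hε : |ε| = 1) (hTH : |T| < H) :
    0 < -ε * (T + -ε * H) := by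
  have hεT : ε * T ≤ |T| := by simpa [abs_mul, hε] using le_abs_self (ε * T)
  have hε2 : ε * ε = 1 := by rw [← abs_mul_abs_self, hε, one_mul]
  linear_combination hTH + hεT - H * hε2

namespace BlockAlgorithm

noncomputable def appendBlock (b : ℕ → ℝ) (q r N d : ℕ) (σ : ℝ) (m : ℕ) : ℝ :=
  if m ≤ q then b m else if r + d < m ∧ m ≤ N + d then σ / (m - d : ℕ) else 0

section AppendBlock

variable {b : ℕ → ℝ} {q r N d : ℕ} {σ : ℝ}

lemma appendBlock_of_le {m : ℕ} (hm : m ≤ q) : appendBlock b q r N d σ m = b m := if_pos hm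

lemma appendBlock_of_lt_of_le {m : ℕ} (hqm : q < m) (hm : m ≤ r + d) :
    appendBlock b q r N d σ m = 0 := by
  simp only [appendBlock, if_neg (not_le.2 hqm)]
  exact if_neg fun h => by omega

lemma appendBlock_add (hq : q ≤ r + d) {j : ℕ} (hj : j ∈ Ioc r N) :
    appendBlock b q r N d σ (j + d) = σ / j := by
  rw [mem_Ioc] at hj
  simp only [appendBlock, if_neg (by omega : ¬j + d ≤ q), Nat.add_sub_cancel]
  exact if_pos ⟨by omega, by omega⟩

lemma sum_appendBlock (F : ℝ → ℝ) (hF : F 0 = 0) (hq : q ≤ r + d) (hN : r ≤ N) :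
    ∑ m ∈ Icc 1 (N + d), F (appendBlock b q r N d σ m) =
      ∑ m ∈ Icc 1 q, F (b m) + ∑ j ∈ Ioc r N, F (σ / j) := by
  rw [← sum_Icc_one_add_sum_Ioc _ (by omega : q ≤ N + d),
    ← sum_Ioc_consecutive _ hq (by omega : r + d ≤ N + d)]
  have hgap : ∑ m ∈ Ioc q (r + d), F (appendBlock b q r N d σ m) = 0 :=
    sum_eq_zero fun m hm => by
      rw [mem_Ioc] at hm
      rw [appendBlock_of_lt_of_le hm.1 hm.2, hF]
  rw [hgap, zero_add, ← map_add_right_Ioc, sum_map]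
  congr 1
  · exact sum_congr rfl fun m hm => by rw [appendBlock_of_le (mem_Icc.1 hm).2]
  · exact sum_congr rfl fun j hj => by rw [addRightEmbedding_apply, appendBlock_add hq hj]

lemma appendBlock_mem_Icc (hb : ∀ m, 1 ≤ m → m ≤ q → b m ∈ Set.Icc (-1) 1) (hσ : |σ| = 1)
    {m : ℕ} (hm : 1 ≤ m) : appendBlock b q r N d σ m ∈ Set.Icc (-1) 1 := by
  unfold appendBlock
  split_ifs with hmq hblock
  · exact hb m hm hmq
  · have hj : (1 : ℝ) ≤ (m - d : ℕ) := by exact_mod_cast (by omega : 1 ≤ m - d)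
    rw [Set.mem_Icc, ← abs_le, abs_div, hσ, Nat.abs_cast, div_le_one (by positivity)]
    exact hj
  · simp

end AppendBlock

/-- The data `(p_k, q_k, r_k, z_k, β)` of stage `k`; only `b m` for `m ≤ q` is meaningful. -/
structure Stage where
  p : ℕ
  q : ℕ
  r : ℕ
  z : ℝ
  b : ℕ → ℝ

namespace Stage

variable (α : ℕ → ℕ)

def eval (s : Stage) (x : ℝ) : ℝ := ∑ m ∈ Icc 1 s.q, s.b m * x ^ α m

/-- Conditions (i), (vi), (viii) and (ix) of a stage, `ε = ±1` being the sign required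
in (ix). -/
structure IsValid (ε : ℝ) (s : Stage) : Prop where
  z_mem : s.z ∈ Set.Ioo 0 1
  b_mem : ∀ m, 1 ≤ m → m ≤ s.q → s.b m ∈ Set.Icc (-1) 1
  sum_rpow : ∀ γ : ℝ, 1 ≤ γ →
    ∑ m ∈ Icc 1 s.q, |s.b m| ^ γ = ∑ m ∈ Icc 1 s.r, ((1 : ℝ) / m) ^ γ
  sign_pos : 0 < ε * s.eval α s.z

structure IsNext (s t : Stage) : Prop where
  z_lt : s.z < t.z
  q_lt_p : s.q < t.p
  p_lt_q : t.p < t.q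
  r_lt : s.r < t.r
  b_eq : ∀ m ≤ s.q, t.b m = s.b m
  b_eq_zero : ∀ m, s.q < m → m < t.p → t.b m = 0
  summable_tail : Summable fun m => s.z ^ α (m + t.p)
  tail_pos : 0 < ∑' m, s.z ^ α (m + t.p)
  tail_lt : ∑' m, s.z ^ α (m + t.p) < |s.eval α s.z|

variable {α}

theorem exists_isNext (hα : ∀ m, 1 ≤ m → m ≤ α m) {ε : ℝ} (hε : |ε| = 1) {s : Stage}
    (hs : s.IsValid α ε) : ∃ t, t.IsValid α (-ε) ∧ s.IsNext α t := by
  have hS : 0 < |s.eval α s.z| := abs_pos.2 (right_ne_zero_of_mul hs.sign_pos.ne')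
  set T := ∑ m ∈ Icc 1 s.q, s.b m
  obtain ⟨N, hN, hTN⟩ : ∃ N, s.r + 1 < N ∧ |T| < ∑ j ∈ Ioc s.r N, (1 : ℝ) / j :=
    ((eventually_gt_atTop _).and ((tendsto_sum_Ioc_one_div s.r).eventually_gt_atTop _)).exists
  obtain ⟨d, hdq, htail⟩ :
      ∃ d, s.q ≤ d ∧ ∑' m, s.z ^ α (m + (d + (s.r + 1))) < |s.eval α s.z| :=
    ((eventually_ge_atTop _).and ((tendsto_add_atTop_iff_nat (s.r + 1)).2
      (tendsto_tsum_pow_comp_add hα hs.z_mem) |>.eventually (gt_mem_nhds hS))).exists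
  have hqd : s.q ≤ s.r + d := by omega
  set H := ∑ j ∈ Ioc s.r N, (1 : ℝ) / j
  set b' := appendBlock s.b s.q s.r N d (-ε)
  have hsum : ∑ m ∈ Icc 1 (N + d), b' m = T + -ε * H := by
    have := sum_appendBlock (b := s.b) (σ := -ε) id rfl hqd (by omega : s.r ≤ N)
    simp only [id] at this
    rw [this, mul_sum]
    simp only [mul_one_div, T]
  have hsign₁ : 0 < -ε * ∑ m ∈ Icc 1 (N + d), b' m * 1 ^ α m := by
    simpa only [one_pow, mul_one, hsum] using neg_mul_add_neg_mul_pos hε hTN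
  obtain ⟨z', hz', hsign⟩ := exists_mem_Ioo_pos_of_continuousAt hs.z_mem.2
    (f := fun x => -ε * ∑ m ∈ Icc 1 (N + d), b' m * x ^ α m) (by fun_prop) hsign₁
  refine ⟨⟨d + (s.r + 1), N + d, N, z', b'⟩, ⟨⟨hs.z_mem.1.trans hz'.1, hz'.2⟩,
    fun m hm _ => appendBlock_mem_Icc hs.b_mem (by rw [abs_neg, hε]) hm, fun γ hγ => ?_, hsign⟩,
    ⟨hz'.1, (by omega : s.q < d + (s.r + 1)), (by omega : d + (s.r + 1) < N + d),
      hN.trans' (by omega),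
      fun m hm => appendBlock_of_le hm,
      fun m hqm (hm : m < d + (s.r + 1)) => appendBlock_of_lt_of_le hqm (by omega),
      summable_pow_comp_add hα hs.z_mem (by omega : 1 ≤ d + (s.r + 1)),
      tsum_pow_comp_add_pos hα hs.z_mem (by omega : 1 ≤ d + (s.r + 1)), htail⟩⟩
  have hγ0 : γ ≠ 0 := by positivity
  rw [sum_appendBlock (fun x => |x| ^ γ) (by simp [hγ0]) hqd (by omega), hs.sum_rpow γ hγ,
    ← sum_Icc_one_add_sum_Ioc _ (by omega : s.r ≤ N)]
  congr 1
  exact sum_congr rfl fun j _ => by rw [abs_div, abs_neg, hε, Nat.abs_cast, one_div]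

lemma isValid_init {z₁ : ℝ} (hz₁ : z₁ ∈ Set.Ioo 0 1) :
    (⟨1, 1, 1, z₁, fun _ => 1⟩ : Stage).IsValid α 1 :=
  ⟨hz₁, fun _ _ _ => by simp, fun γ _ => by simp, by simp [eval, pow_pos hz₁.1]⟩

end Stage

end BlockAlgorithm

open BlockAlgorithm in
/-- Existence form of Lemma 3.1 of the paper: Algorithm 3.1 is executable and its iterates
satisfy conditions (i)-(x). -/
theorem stmt3 (α : ℕ → ℕ) (hα : ∀ m : ℕ, 1 ≤ m → m ≤ α m)
    (z₁ : ℝ) (hz₁ : z₁ ∈ Set.Ioo (0 : ℝ) 1) :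
    ∃ (β : ℕ → ℝ) (z : ℕ → ℝ) (p q r : ℕ → ℕ),
      p 1 = 1 ∧ q 1 = 1 ∧ r 1 = 1 ∧ β 1 = 1 ∧ z 1 = z₁ ∧
      ∀ k : ℕ, 1 ≤ k →
        -- (i)
        z k ∈ Set.Ioo (0 : ℝ) 1 ∧
        -- (ii)
        z k < z (k + 1) ∧
        -- (iii)
        q k < p (k + 1) ∧
        -- (iv)
        p (k + 1) < q (k + 1) ∧
        -- (v)
        r k < r (k + 1) ∧
        -- (vi)
        (∀ m : ℕ, 1 ≤ m → m ≤ q k → β m ∈ Set.Icc (-1 : ℝ) 1) ∧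
        -- (vii)
        (∀ m : ℕ, q k < m → m < p (k + 1) → β m = 0) ∧
        -- (viii)
        (∀ γ : ℝ, 1 ≤ γ →
          (∑ m ∈ Finset.Icc 1 (q k), |β m| ^ γ) =
            ∑ m ∈ Finset.Icc 1 (r k), ((1 : ℝ) / m) ^ γ) ∧
        -- (ix)
        (Odd k → 0 < ∑ m ∈ Finset.Icc 1 (q k), β m * z k ^ α m) ∧
        (Even k → (∑ m ∈ Finset.Icc 1 (q k), β m * z k ^ α m) < 0) ∧
        -- (x)
        Summable (fun m : ℕ => z k ^ α (m + p (k + 1))) ∧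
        0 < ∑' m : ℕ, z k ^ α (m + p (k + 1)) ∧
        (∑' m : ℕ, z k ^ α (m + p (k + 1))) <
          |∑ m ∈ Finset.Icc 1 (q k), β m * z k ^ α m| := by
  obtain ⟨G, hG₀, hG⟩ := exists_seq_of_forall_exists_succ
    (P := fun n s => s.IsValid α ((-1) ^ n)) (R := Stage.IsNext α) (Stage.isValid_init hz₁)
    fun n s hs => by
      rw [pow_succ, mul_neg_one]
      exact Stage.exists_isNext hα (by simp) hs
  -- stage `k` of the algorithm is `G (k - 1)`
  have hq : StrictMono fun n => (G n).q :=
    strictMono_nat_of_lt_succ fun n => (hG n).2.q_lt_p.trans (hG n).2.p_lt_q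
  have hβ : ∀ n m, m ≤ (G n).q → (G m).b m = (G n).b m := fun n m =>
    diag_eq_of_forall_succ_eq (b := fun n => (G n).b) hq fun n m hm => (hG n).2.b_eq m hm
  refine ⟨fun m => (G m).b m, fun k => (G (k - 1)).z, fun k => (G (k - 1)).p,
    fun k => (G (k - 1)).q, fun k => (G (k - 1)).r, by simp [hG₀], by simp [hG₀], by simp [hG₀],
    by simp [hβ 0 1 (by simp [hG₀]), hG₀], by simp [hG₀], ?_⟩
  intro k hk
  obtain ⟨n, rfl⟩ : ∃ n, k = n + 1 := ⟨k - 1, by omega⟩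
  obtain ⟨hv, hn⟩ := hG n
  have hsum : ∀ F : ℝ → ℕ → ℝ,
      ∑ m ∈ Icc 1 (G n).q, F ((G m).b m) m = ∑ m ∈ Icc 1 (G n).q, F ((G n).b m) m :=
    fun F => sum_congr rfl fun m hm => by rw [hβ n m (mem_Icc.1 hm).2]
  simp only [Nat.add_sub_cancel, hsum (fun x m => x * (G n).z ^ α m)]
  refine ⟨hv.z_mem, hn.z_lt, hn.q_lt_p, hn.p_lt_q, hn.r_lt,
    fun m h₁ h₂ => hβ n m h₂ ▸ hv.b_mem m h₁ h₂,
    fun m h₁ h₂ => (hβ (n + 1) m (h₂.trans hn.p_lt_q).le).trans (hn.b_eq_zero m h₁ h₂),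
    fun γ hγ => (hsum fun x _ => |x| ^ γ).trans (hv.sum_rpow γ hγ),
    (sign_of_neg_one_pow_mul_pos hv.sign_pos).1, (sign_of_neg_one_pow_mul_pos hv.sign_pos).2,
    hn.summable_tail, hn.tail_pos, hn.tail_lt⟩
end

section
/- Let T ∈ ℝ. Then there exist a sequence β : ℕ → ℝ (indexed by m = 1, 2, 3, …) with β_m ∈ [-1,1] for all m and ∑_{m=1}^∞ |β_m|^q < ∞ for every q ∈ (1,∞), and a strictly increasing sequence {t_k}_{k≥1} ⊂ (-∞, T) with t_k → T as k → ∞, such that the function φ : (-∞, T) → ℝ defined by φ(t) := ∑_{m=1}^∞ β_m e^{-m²π²(T-t)} is real-analytic on (-∞, T), satisfies φ(t_k) > 0 for all odd k, and satisfies φ(t_k) < 0 for all even k. -/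
/-!
With `x = exp (π² (t - T)) ∈ (0, 1)`, the function is the lacunary power series
`∑ s_j x^{n_j}` over a very sparse sequence of squares `n_0 < n_1 < ⋯`, whose coefficients are
bounded, so it is analytic on `|x| < 1`. The exponents and points `x_0 < x_1 < ⋯ → 1` are chosen
alternately so that `x_k^{n_j}` is within `δ_k` of `1` for `j ≤ k` and of `0` for `j > k`; then
the series at `x_k` is within `3 δ_k` of the partial sum `s_0 + ⋯ + s_k = (-1/2)^{k+1}`, and
`δ_k = 2^{-(k+1)}/4` makes its sign alternate.
-/

open Filter Topology Set Function

theorem exists_seq_of_forall_exists_succ_s4 {α : Type*} (P : ℕ → α → Prop) (R : ℕ → α → α → Prop)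
    {a : α} (ha : P 0 a) (h : ∀ k x, P k x → ∃ y, P (k + 1) y ∧ R k x y) :
    ∃ f : ℕ → α, ∀ k, P k (f k) ∧ R k (f k) (f (k + 1)) := by
  choose g hgP hgR using h
  let F : (k : ℕ) → {x // P k x} := fun k =>
    Nat.rec ⟨a, ha⟩ (fun k x => ⟨g k x x.2, hgP k x x.2⟩) k
  refine ⟨fun k => (F k).1, fun k => ?_⟩
  exact ⟨(F k).2, hgR k _ (F k).2⟩

theorem exists_mem_Ioo_one_sub_le_pow (N : ℕ) {v ε : ℝ} (hv : v < 1) (hε : 0 < ε) :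
    ∃ w ∈ Ioo v 1, 1 - ε ≤ w ^ N := by
  have hpow : Tendsto (fun w : ℝ => w ^ N) (𝓝[<] 1) (𝓝 1) :=
    ((continuous_pow N).tendsto' 1 1 (one_pow N)).mono_left nhdsWithin_le_nhds
  have hIoo : ∀ᶠ w in 𝓝[<] (1 : ℝ), w ∈ Ioo v 1 := Ioo_mem_nhdsLT hv
  have hclose : ∀ᶠ w in 𝓝[<] (1 : ℝ), 1 - ε ≤ w ^ N :=
    (hpow.eventually (eventually_gt_nhds (by linarith : 1 - ε < 1))).mono fun _ => le_of_lt
  exact (hIoo.and hclose).exists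

theorem exists_gt_pow_le {f : ℕ → ℕ} (hf : Tendsto f atTop atTop) {v ε : ℝ} (hv₀ : 0 ≤ v)
    (hv₁ : v < 1) (hε : 0 < ε) (M : ℕ) : ∃ m, M < m ∧ v ^ f m ≤ ε :=
  ((eventually_gt_atTop M).and
    (((tendsto_pow_atTop_nhds_zero_of_lt_one hv₀ hv₁).comp hf).eventually (ge_mem_nhds hε))).exists

theorem exists_pow_approx_indicator {f : ℕ → ℕ} (hf : Tendsto f atTop atTop) {δ : ℕ → ℝ}
    (hδ : ∀ k, 0 < δ k) :
    ∃ (p : ℕ → ℕ) (u : ℕ → ℝ), StrictMono p ∧ StrictMono u ∧ (∀ k, u k ∈ Ioo 0 1) ∧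
      (∀ k, 1 - δ k ≤ u k ^ f (p k)) ∧ (∀ k, u k ^ f (p (k + 1)) ≤ δ k) := by
  obtain ⟨u₀, hu₀, hu₀δ⟩ := exists_mem_Ioo_one_sub_le_pow (f 0) zero_lt_one (hδ 0)
  obtain ⟨x, hx⟩ := exists_seq_of_forall_exists_succ_s4
    (fun k (x : ℕ × ℝ) => x.2 ∈ Ioo 0 1 ∧ 1 - δ k ≤ x.2 ^ f x.1)
    (fun k x y => x.1 < y.1 ∧ x.2 < y.2 ∧ x.2 ^ f y.1 ≤ δ k) (a := (0, u₀)) ⟨hu₀, hu₀δ⟩ <| by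
      rintro k ⟨m, v⟩ ⟨hv, -⟩
      obtain ⟨m', hmm', hm'⟩ := exists_gt_pow_le hf hv.1.le hv.2 (hδ k) m
      obtain ⟨w, hw, hwδ⟩ := exists_mem_Ioo_one_sub_le_pow (f m') hv.2 (hδ (k + 1))
      exact ⟨(m', w), ⟨⟨hv.1.trans hw.1, hw.2⟩, hwδ⟩, hmm', hw.1, hm'⟩
  exact ⟨fun k => (x k).1, fun k => (x k).2, strictMono_nat_of_lt_succ fun k => (hx k).2.1,
    strictMono_nat_of_lt_succ fun k => (hx k).2.2.1, fun k => (hx k).1.1, fun k => (hx k).1.2,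
    fun k => (hx k).2.2.2⟩

theorem extend_zero_mul_apply {p : ℕ → ℕ} (hp : Injective p) (s g : ℕ → ℝ) (m : ℕ) :
    extend p s 0 m * g m = extend p (fun j => s j * g (p j)) 0 m := by
  by_cases h : ∃ j, p j = m
  · obtain ⟨j, rfl⟩ := h
    rw [hp.extend_apply, hp.extend_apply]
  · simp [extend_apply' _ _ _ h]

theorem tsum_extend_zero_mul {p : ℕ → ℕ} (hp : Injective p) (s g : ℕ → ℝ) :
    ∑' m, extend p s 0 m * g m = ∑' j, s j * g (p j) := by
  simp_rw [extend_zero_mul_apply hp, tsum_extend_zero hp]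

theorem abs_extend_zero_le {p : ℕ → ℕ} {s : ℕ → ℝ} {C : ℝ} (hC : 0 ≤ C) (hs : ∀ j, |s j| ≤ C)
    (m : ℕ) : |extend p s 0 m| ≤ C := by
  classical
  rw [extend_def]
  split_ifs
  exacts [hs _, by simpa using hC]

theorem summable_abs_extend_zero_rpow {p : ℕ → ℕ} (hp : Injective p) {s : ℕ → ℝ} {q : ℝ}
    (hq : q ≠ 0) (hs : Summable fun j => |s j| ^ q) : Summable fun m => |extend p s 0 m| ^ q := by
  have h : (fun m => |extend p s 0 m| ^ q) = extend p (fun j => |s j| ^ q) 0 := by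
    ext m
    classical
    simp only [extend_def]
    split_ifs <;> simp [Real.zero_rpow hq]
  rw [h]
  exact (summable_extend_zero hp).2 hs

noncomputable def lacunarySeries (s : ℕ → ℝ) (n : ℕ → ℕ) (x : ℝ) : ℝ := ∑' j, s j * x ^ n j

theorem analyticAt_tsum_mul_pow {d : ℕ → ℝ} {C : ℝ} (hd : ∀ N, |d N| ≤ C) {x : ℝ} (hx : |x| < 1) :
    AnalyticAt ℝ (fun y => ∑' N, d N * y ^ N) x := by
  set P := FormalMultilinearSeries.ofScalars ℝ d
  have hr : 1 ≤ P.radius := by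
    simpa using P.le_radius_of_bound C (r := 1) fun N => by
      simpa [P, FormalMultilinearSeries.ofScalars_norm] using hd N
  have hP := P.hasFPowerSeriesOnBall (zero_lt_one.trans_le hr)
  have hsum : P.sum = fun y => ∑' N, d N * y ^ N := by
    ext y
    exact FormalMultilinearSeries.ofScalars_sum_eq d y
  rw [← hsum]
  refine hP.analyticAt_of_mem (lt_of_lt_of_le ?_ hr)
  simpa [edist_dist, Real.dist_eq] using hx

theorem analyticAt_lacunarySeries {s : ℕ → ℝ} {n : ℕ → ℕ} (hn : Injective n) {C : ℝ} (hC : 0 ≤ C)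
    (hs : ∀ j, |s j| ≤ C) {x : ℝ} (hx : |x| < 1) : AnalyticAt ℝ (lacunarySeries s n) x := by
  have h : lacunarySeries s n = fun y => ∑' N, extend n s 0 N * y ^ N := by
    ext y
    exact (tsum_extend_zero_mul hn s (y ^ ·)).symm
  rw [h]
  exact analyticAt_tsum_mul_pow (abs_extend_zero_le hC hs) hx

theorem abs_lacunarySeries_sub_sum_le {s : ℕ → ℝ} (hs : Summable fun j => |s j|) {n : ℕ → ℕ}
    (hn : Monotone n) {u δ : ℝ} (hu₀ : 0 ≤ u) (hu₁ : u ≤ 1) {k : ℕ} (hk : 1 - δ ≤ u ^ n k)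
    (hk' : u ^ n (k + 1) ≤ δ) :
    |lacunarySeries s n u - ∑ j ∈ Finset.range (k + 1), s j| ≤ δ * ∑' j, |s j| := by
  have hδ : 0 ≤ δ := (pow_nonneg hu₀ _).trans hk'
  set e : ℕ → ℝ := fun j => if j ≤ k then 1 else 0
  have he : ∀ j, |u ^ n j - e j| ≤ δ := by
    intro j
    by_cases hj : j ≤ k
    · rw [show e j = 1 from if_pos hj, abs_sub_comm,
        abs_of_nonneg (sub_nonneg.2 (pow_le_one₀ hu₀ hu₁))]
      linarith [pow_le_pow_of_le_one hu₀ hu₁ (hn hj)]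
    · rw [show e j = 0 from if_neg hj, sub_zero, abs_of_nonneg (pow_nonneg hu₀ _)]
      exact (pow_le_pow_of_le_one hu₀ hu₁ (hn (by omega))).trans hk'
  have hbound : ∀ j, |s j * (u ^ n j - e j)| ≤ δ * |s j| := fun j => by
    rw [abs_mul, mul_comm]
    exact mul_le_mul_of_nonneg_right (he j) (abs_nonneg _)
  have hsum : ∑ j ∈ Finset.range (k + 1), s j = ∑' j, s j * e j := by
    rw [tsum_eq_sum (s := Finset.range (k + 1))]
    · refine Finset.sum_congr rfl fun j hj => ?_
      simp [e, Nat.lt_succ_iff.1 (Finset.mem_range.1 hj)]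
    · intro j hj
      simp [e, Finset.mem_range] at hj ⊢
      omega
  have he₀ : ∀ j, |e j| ≤ 1 := fun j => by by_cases hj : j ≤ k <;> simp [e, hj]
  have hsummable : Summable fun j => s j * e j :=
    .of_norm_bounded hs fun j => by
      simpa [abs_mul] using mul_le_of_le_one_right (abs_nonneg _) (he₀ j)
  have hsummable' : Summable fun j => s j * u ^ n j :=
    .of_norm_bounded hs fun j => by
      simpa [abs_mul, abs_of_nonneg hu₀] using
        mul_le_of_le_one_right (abs_nonneg _) (pow_le_one₀ hu₀ hu₁)
  have hdiff : lacunarySeries s n u - ∑ j ∈ Finset.range (k + 1), s j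
      = ∑' j, s j * (u ^ n j - e j) := by
    rw [hsum, lacunarySeries, ← hsummable'.tsum_sub hsummable]
    simp_rw [mul_sub]
  rw [hdiff]
  exact tsum_of_norm_bounded (hs.hasSum.mul_left δ) fun j =>
    (Real.norm_eq_abs _).trans_le (hbound j)

noncomputable def signCoeff : ℕ → ℝ
  | 0 => -1 / 2
  | j + 1 => 3 * (-1 / 2) ^ (j + 2)

theorem sum_range_signCoeff (k : ℕ) :
    ∑ j ∈ Finset.range (k + 1), signCoeff j = (-1 / 2) ^ (k + 1) := by
  induction k with
  | zero => norm_num [signCoeff]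
  | succ k ih => rw [Finset.sum_range_succ, ih, signCoeff]; ring

theorem abs_signCoeff_le (j : ℕ) : |signCoeff j| ≤ 3 / 2 * (1 / 2) ^ j := by
  cases j with
  | zero => norm_num [signCoeff]
  | succ j =>
    refine le_of_eq ?_
    simp only [signCoeff, abs_mul, abs_pow]
    norm_num
    ring

theorem abs_signCoeff_le_one (j : ℕ) : |signCoeff j| ≤ 1 := by
  cases j with
  | zero => norm_num [signCoeff]
  | succ j =>
    calc |signCoeff (j + 1)| ≤ 3 / 2 * (1 / 2) ^ (j + 1) := abs_signCoeff_le _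
      _ ≤ 3 / 2 * (1 / 2) ^ 1 := by
        gcongr 3 / 2 * ?_
        exact pow_le_pow_of_le_one (by norm_num) (by norm_num) (by omega)
      _ ≤ 1 := by norm_num

theorem summable_abs_signCoeff : Summable fun j => |signCoeff j| :=
  .of_nonneg_of_le (fun _ => abs_nonneg _) abs_signCoeff_le (summable_geometric_two.mul_left _)

theorem tsum_abs_signCoeff_le : ∑' j, |signCoeff j| ≤ 3 := by
  refine (summable_abs_signCoeff.tsum_le_tsum abs_signCoeff_le
    (summable_geometric_two.mul_left _)).trans_eq ?_
  rw [tsum_mul_left, tsum_geometric_two]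
  norm_num

theorem summable_abs_signCoeff_rpow {q : ℝ} (hq : 1 ≤ q) : Summable fun j => |signCoeff j| ^ q :=
  .of_nonneg_of_le (fun _ => by positivity)
    (fun j => Real.rpow_le_self_of_le_one (abs_nonneg _) (abs_signCoeff_le_one j) hq)
    summable_abs_signCoeff

theorem neg_one_pow_mul_lacunarySeries_signCoeff_pos {n : ℕ → ℕ} (hn : Monotone n) {u : ℝ}
    (hu₀ : 0 ≤ u) (hu₁ : u ≤ 1) {k : ℕ} (hk : 1 - (1 / 2) ^ (k + 1) / 4 ≤ u ^ n k)
    (hk' : u ^ n (k + 1) ≤ (1 / 2) ^ (k + 1) / 4) :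
    0 < (-1) ^ (k + 1) * lacunarySeries signCoeff n u := by
  have hε : (0 : ℝ) < (1 / 2) ^ (k + 1) := by positivity
  have hclose := abs_lacunarySeries_sub_sum_le summable_abs_signCoeff hn hu₀ hu₁ hk hk'
  rw [sum_range_signCoeff] at hclose
  have hsign : (-1) ^ (k + 1) * lacunarySeries signCoeff n u - (1 / 2) ^ (k + 1)
      = (-1) ^ (k + 1) * (lacunarySeries signCoeff n u - (-1 / 2) ^ (k + 1)) := by
    rw [mul_sub, ← mul_pow]; norm_num
  have hdist : |(-1) ^ (k + 1) * lacunarySeries signCoeff n u - (1 / 2) ^ (k + 1)|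
      ≤ 3 * ((1 / 2) ^ (k + 1) / 4) := by
    rw [hsign, abs_mul, abs_pow, abs_neg, abs_one, one_pow, one_mul, mul_comm]
    exact hclose.trans (mul_le_mul_of_nonneg_left tsum_abs_signCoeff_le (by positivity))
  linarith [(abs_le.1 hdist).1]

theorem tendsto_nhds_one_of_one_sub_le_pow {u δ : ℕ → ℝ} {N : ℕ → ℕ} (hN : ∀ k, N k ≠ 0)
    (hu : ∀ k, u k ∈ Ioo 0 1) (hδ : Tendsto δ atTop (𝓝 0)) (h : ∀ k, 1 - δ k ≤ u k ^ N k) :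
    Tendsto u atTop (𝓝 1) := by
  refine tendsto_of_tendsto_of_tendsto_of_le_of_le (g := fun k => 1 - δ k) ?_ tendsto_const_nhds
    (fun k => (h k).trans (pow_le_of_le_one (hu k).1.le (hu k).2.le (hN k))) fun k => (hu k).2.le
  simpa using (tendsto_const_nhds (x := (1 : ℝ))).sub hδ

theorem exists_strictMono_tendsto_exp_mul_sub_eq {c : ℝ} (hc : 0 < c) (T : ℝ) {u : ℕ → ℝ}
    (hu : StrictMono u) (hu₀₁ : ∀ k, u k ∈ Ioo 0 1) (hlim : Tendsto u atTop (𝓝 1)) :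
    ∃ t : ℕ → ℝ, StrictMono t ∧ (∀ k, t k < T) ∧ Tendsto t atTop (𝓝 T) ∧
      ∀ k, Real.exp (c * (t k - T)) = u k := by
  refine ⟨fun k => T + Real.log (u k) / c, fun a b hab => ?_, fun k => ?_, ?_, fun k => ?_⟩
  · have := Real.log_lt_log (hu₀₁ a).1 (hu hab)
    dsimp only
    gcongr
  · have : Real.log (u k) / c < 0 :=
      div_neg_of_neg_of_pos (Real.log_neg (hu₀₁ k).1 (hu₀₁ k).2) hc
    dsimp only
    linarith
  · have hlog : Tendsto (fun k => Real.log (u k)) atTop (𝓝 0) := by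
      simpa [Function.comp_def] using (Real.continuousAt_log one_ne_zero).tendsto.comp hlim
    simpa using tendsto_const_nhds.add (hlog.div_const c)
  · rw [add_sub_cancel_left, mul_div_cancel₀ _ hc.ne', Real.exp_log (hu₀₁ k).1]

theorem tsum_extend_succ_mul_exp_eq_lacunarySeries {p : ℕ → ℕ} (hp : Injective p) (s : ℕ → ℝ)
    (T τ : ℝ) :
    ∑' m : ℕ, extend Nat.succ (extend p s 0) 0 (m + 1) *
        Real.exp (-((m + 1 : ℝ)) ^ 2 * Real.pi ^ 2 * (T - τ)) =
      lacunarySeries s (fun j => (p j + 1) ^ 2) (Real.exp (Real.pi ^ 2 * (τ - T))) := by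
  have hexp : ∀ m : ℕ, Real.exp (-((m + 1 : ℝ)) ^ 2 * Real.pi ^ 2 * (T - τ))
      = Real.exp (Real.pi ^ 2 * (τ - T)) ^ (m + 1) ^ 2 := fun m => by
    rw [← Real.exp_nat_mul]; push_cast; ring_nf
  have hshift : ∀ m, extend Nat.succ (extend p s 0) 0 (m + 1) = extend p s 0 m :=
    Nat.succ_injective.extend_apply _ _
  simp_rw [hshift, hexp]
  exact tsum_extend_zero_mul hp s fun m => Real.exp (Real.pi ^ 2 * (τ - T)) ^ (m + 1) ^ 2

/-- PDE-free core of Lemma 4.3 of the paper: a sign-alternating real-analytic function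
`φ(t) = ∑ β_m exp(-m²π²(T-t))` on `(-∞, T)` with oscillation points accumulating at `T`. -/
theorem stmt4 (T : ℝ) :
    ∃ (β : ℕ → ℝ) (t : ℕ → ℝ),
      (∀ m : ℕ, 1 ≤ m → β m ∈ Set.Icc (-1 : ℝ) 1) ∧
      (∀ q : ℝ, 1 < q → Summable fun m : ℕ => |β (m + 1)| ^ q) ∧
      (∀ k : ℕ, 1 ≤ k → t k < T) ∧
      (∀ k : ℕ, 1 ≤ k → t k < t (k + 1)) ∧
      Tendsto t atTop (𝓝 T) ∧
      (∀ s : ℝ, s < T →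
        AnalyticAt ℝ
          (fun τ : ℝ =>
            ∑' m : ℕ, β (m + 1) *
              Real.exp (-((m + 1 : ℝ)) ^ 2 * Real.pi ^ 2 * (T - τ))) s) ∧
      (∀ k : ℕ, 1 ≤ k → Odd k →
        0 < ∑' m : ℕ, β (m + 1) *
          Real.exp (-((m + 1 : ℝ)) ^ 2 * Real.pi ^ 2 * (T - t k))) ∧
      (∀ k : ℕ, 1 ≤ k → Even k →
        (∑' m : ℕ, β (m + 1) *
          Real.exp (-((m + 1 : ℝ)) ^ 2 * Real.pi ^ 2 * (T - t k))) < 0) := by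
  obtain ⟨p, u, hp, hu, hu₀₁, hlow, hhigh⟩ := exists_pow_approx_indicator
    (f := fun m => (m + 1) ^ 2) ((tendsto_pow_atTop two_ne_zero).comp (tendsto_add_atTop_nat 1))
    (δ := fun k => (1 / 2) ^ (k + 1) / 4) fun k => by positivity
  have hδ : Tendsto (fun k : ℕ => ((1 : ℝ) / 2) ^ (k + 1) / 4) atTop (𝓝 0) := by
    simpa using ((tendsto_pow_atTop_nhds_zero_of_lt_one (r := (1 / 2 : ℝ)) (by norm_num)
      (by norm_num)).comp (tendsto_add_atTop_nat 1)).div_const 4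
  have hlim : Tendsto u atTop (𝓝 1) := tendsto_nhds_one_of_one_sub_le_pow
    (fun k => pow_ne_zero 2 (Nat.succ_ne_zero _)) hu₀₁ hδ hlow
  obtain ⟨t, ht, htT, htlim, hexp⟩ :=
    exists_strictMono_tendsto_exp_mul_sub_eq (pow_pos Real.pi_pos 2) T hu hu₀₁ hlim
  have hn : StrictMono fun j => (p j + 1) ^ 2 := fun a b h =>
    Nat.pow_lt_pow_left (by simpa using hp h) two_ne_zero
  have hsign : ∀ k, 0 < (-1) ^ (k + 1) * lacunarySeries signCoeff (fun j => (p j + 1) ^ 2) (u k) :=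
    fun k => neg_one_pow_mul_lacunarySeries_signCoeff_pos hn.monotone (hu₀₁ k).1.le (hu₀₁ k).2.le
      (hlow k) (hhigh k)
  refine ⟨extend Nat.succ (extend p signCoeff 0) 0, t, fun m _ => abs_le.1 ?_, fun q hq => ?_,
    fun k _ => htT k, fun k _ => ht (Nat.lt_succ_self k), htlim, fun s hs => ?_,
    fun k _ hk => ?_, fun k _ hk => ?_⟩
  · exact abs_extend_zero_le zero_le_one (abs_extend_zero_le zero_le_one abs_signCoeff_le_one) m
  · simpa only [Nat.succ_injective.extend_apply] using
      summable_abs_extend_zero_rpow hp.injective (by positivity) (summable_abs_signCoeff_rpow hq.le)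
  · simp_rw [tsum_extend_succ_mul_exp_eq_lacunarySeries hp.injective]
    have hx : |Real.exp (Real.pi ^ 2 * (s - T))| < 1 := by
      rw [abs_of_pos (Real.exp_pos _), Real.exp_lt_one_iff]
      exact mul_neg_of_pos_of_neg (by positivity) (sub_neg.2 hs)
    exact AnalyticAt.comp (f := fun τ => Real.exp (Real.pi ^ 2 * (τ - T)))
      (analyticAt_lacunarySeries hn.injective zero_le_one abs_signCoeff_le_one hx) (by fun_prop)
  · rw [tsum_extend_succ_mul_exp_eq_lacunarySeries hp.injective, hexp]
    simpa [hk.add_one.neg_one_pow] using hsign k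
  · rw [tsum_extend_succ_mul_exp_eq_lacunarySeries hp.injective, hexp]
    simpa [hk.add_one.neg_one_pow] using hsign k
end

section
/- Let α : ℕ → ℕ (indexed by m = 1, 2, 3, …) satisfy α_m ≥ m for all m, let z ∈ (0,1), let β : ℕ → ℝ satisfy |β_m| ≤ 1 for all m, and let q < p be positive integers such that β_m = 0 for all m with q < m < p. If |∑_{m=1}^{q} β_m z^{α_m}| > ∑_{m=p}^∞ z^{α_m}, then for every integer Q ≥ q the finite sum ∑_{m=1}^{Q} β_m z^{α_m} is strictly positive whenever ∑_{m=1}^{q} β_m z^{α_m} > 0 and strictly negative whenever ∑_{m=1}^{q} β_m z^{α_m} < 0. -/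
/-!
With `S n = ∑_{m ≤ n} β_m z^{α_m}`, the difference `S Q - S q` is a sum over `q < m ≤ Q` whose
terms with `m < p` vanish and whose other terms are bounded by `z^{α_m} ≤ z^m`. Hence
`|S Q - S q|` is at most the convergent tail `∑_{m ≥ p} z^{α_m}`, which is below `|S q|`, so `S Q`
has the sign of `S q`.
-/

open Finset

lemma pos_imp_pos_and_neg_imp_neg_of_abs_sub_lt_abs {G : Type*} [AddCommGroup G]
    [LinearOrder G] [IsOrderedAddMonoid G] {x y : G} (h : |y - x| < |x|) :
    (0 < x → 0 < y) ∧ (x < 0 → y < 0) := by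
  obtain ⟨hlo, hhi⟩ := abs_sub_lt_iff.mp h
  constructor
  · intro hx
    rw [abs_of_pos hx] at hhi
    exact (sub_lt_self_iff x).mp hhi
  · intro hx
    rw [abs_of_neg hx, sub_lt_iff_lt_add, neg_add_cancel] at hlo
    exact hlo

lemma summable_pow_of_le_exponent {z : ℝ} (hz0 : 0 ≤ z) (hz1 : z < 1) {α : ℕ → ℕ}
    (hα : ∀ m, m ≤ α m) : Summable fun m => z ^ α m :=
  (summable_geometric_of_lt_one hz0 hz1).of_nonneg_of_le (fun _ => by positivity)
    (fun m => pow_le_pow_of_le_one hz0 hz1.le (hα m))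

lemma sum_le_tsum_nat_add {g : ℕ → ℝ} (hg : ∀ m, 0 ≤ g m) {p : ℕ}
    (hsum : Summable fun m => g (m + p)) {s : Finset ℕ} (hs : ∀ m ∈ s, p ≤ m) :
    ∑ m ∈ s, g m ≤ ∑' m, g (m + p) :=
  calc ∑ m ∈ s, g m = ∑ k ∈ s.image (· - p), g (k + p) := by
        rw [sum_image fun m hm n hn hmn => by
          have := hs m hm; have := hs n hn; omega]
        exact sum_congr rfl fun m hm => by rw [Nat.sub_add_cancel (hs m hm)]
    _ ≤ ∑' m, g (m + p) := hsum.sum_le_tsum _ fun _ _ => hg _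

lemma abs_sum_Ioc_le_tsum_nat_add {a g : ℕ → ℝ} (hg : ∀ m, 0 ≤ g m) {q p : ℕ}
    (hsum : Summable fun m => g (m + p)) (hag : ∀ m, q < m → |a m| ≤ g m)
    (hzero : ∀ m, q < m → m < p → a m = 0) (Q : ℕ) :
    |∑ m ∈ Ioc q Q, a m| ≤ ∑' m, g (m + p) := by
  have hsupport : ∀ m ∈ Ioc q Q, a m ≠ 0 → p ≤ m := fun m hm ham => by
    by_contra! hmp
    exact ham (hzero m (mem_Ioc.mp hm).1 hmp)
  calc |∑ m ∈ Ioc q Q, a m| = |∑ m ∈ Ioc q Q with p ≤ m, a m| := by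
        rw [sum_filter_of_ne hsupport]
    _ ≤ ∑ m ∈ Ioc q Q with p ≤ m, |a m| := abs_sum_le_sum_abs _ _
    _ ≤ ∑ m ∈ Ioc q Q with p ≤ m, g m :=
        sum_le_sum fun m hm => hag m (mem_Ioc.mp (mem_filter.mp hm).1).1
    _ ≤ ∑' m, g (m + p) := sum_le_tsum_nat_add hg hsum fun m hm => (mem_filter.mp hm).2

theorem stmt10_general (α : ℕ → ℕ) (hα : ∀ m : ℕ, 1 ≤ m → m ≤ α m)
    (z : ℝ) (hz : z ∈ Set.Ioo (0 : ℝ) 1)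
    (β : ℕ → ℝ) (hβ : ∀ m : ℕ, 1 ≤ m → |β m| ≤ 1)
    (q p : ℕ)
    (hzero : ∀ m : ℕ, q < m → m < p → β m = 0)
    (hdom : (∑' m : ℕ, z ^ α (m + p)) < |∑ m ∈ Finset.Icc 1 q, β m * z ^ α m|) :
    ∀ Q : ℕ, q ≤ Q →
      (0 < ∑ m ∈ Finset.Icc 1 q, β m * z ^ α m →
        0 < ∑ m ∈ Finset.Icc 1 Q, β m * z ^ α m) ∧
      ((∑ m ∈ Finset.Icc 1 q, β m * z ^ α m) < 0 →
        (∑ m ∈ Finset.Icc 1 Q, β m * z ^ α m) < 0) := by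
  intro Q hQ
  obtain ⟨hz0, hz1⟩ := hz
  have hsum : Summable fun m => z ^ α (m + p) :=
    (summable_nat_add_iff p).mpr <| summable_pow_of_le_exponent hz0.le hz1 fun m => by
      rcases Nat.eq_zero_or_pos m with rfl | hm
      exacts [Nat.zero_le _, hα m hm]
  have hterm : ∀ m, q < m → |β m * z ^ α m| ≤ z ^ α m := fun m hm => by
    rw [abs_mul, abs_of_pos (pow_pos hz0 _)]
    exact mul_le_of_le_one_left (pow_pos hz0 _).le (hβ m (by omega))
  have hsplit : ∑ m ∈ Icc 1 Q, β m * z ^ α m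
      = ∑ m ∈ Icc 1 q, β m * z ^ α m + ∑ m ∈ Ioc q Q, β m * z ^ α m := by
    rw [show ∀ n : ℕ, Icc 1 n = Ioc 0 n from Icc_add_one_left_eq_Ioc 0]
    exact (sum_Ioc_consecutive _ (Nat.zero_le q) hQ).symm
  refine pos_imp_pos_and_neg_imp_neg_of_abs_sub_lt_abs ?_
  rw [hsplit, add_sub_cancel_left]
  exact (abs_sum_Ioc_le_tsum_nat_add (g := fun m => z ^ α m) (fun _ => by positivity) hsum hterm
    (fun m hqm hmp => by rw [hzero m hqm hmp, zero_mul]) Q).trans_lt hdom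

/-- Finite-sum version of the sign-propagation estimate (Theorem 3.2(iv) of the paper):
the partial sums `∑_{m=1}^Q β_m z^{α_m}`, `Q ≥ q`, have the sign of the head
`∑_{m=1}^q β_m z^{α_m}` when the head dominates the tail `∑_{m=p}^∞ z^{α_m}`. -/
theorem stmt10 (α : ℕ → ℕ) (hα : ∀ m : ℕ, 1 ≤ m → m ≤ α m)
    (z : ℝ) (hz : z ∈ Set.Ioo (0 : ℝ) 1)
    (β : ℕ → ℝ) (hβ : ∀ m : ℕ, 1 ≤ m → |β m| ≤ 1)
    (q p : ℕ) (hq : 1 ≤ q) (hqp : q < p)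
    (hzero : ∀ m : ℕ, q < m → m < p → β m = 0)
    (hdom : (∑' m : ℕ, z ^ α (m + p)) < |∑ m ∈ Finset.Icc 1 q, β m * z ^ α m|) :
    ∀ Q : ℕ, q ≤ Q →
      (0 < ∑ m ∈ Finset.Icc 1 q, β m * z ^ α m →
        0 < ∑ m ∈ Finset.Icc 1 Q, β m * z ^ α m) ∧
      ((∑ m ∈ Finset.Icc 1 q, β m * z ^ α m) < 0 →
        (∑ m ∈ Finset.Icc 1 Q, β m * z ^ α m) < 0) :=
  stmt10_general α hα z hz β hβ q p hzero hdom
end
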